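/- arXiv:1211.1930 — 2 statements merged into one kernel-verified Lean document; each statement's English description precedes it below -/
import Mathlib

section
/- If r(t,·) is a C¹-in-time family of smooth positive 2π-periodic functions solving r_t = √(1+r_x²)[h(r) − H(r)], then the enclosed volume functional F(r(t)) = ∫_{−π}^{π} r(t,x)² dx is constant in t. -/
open Real
open scoped ContDiff

noncomputable def meanCurv (r : ℝ → ℝ) (x : ℝ) : ℝ :=
  1 / (r x * Real.sqrt (1 + (deriv r x) ^ 2)) -
    deriv (deriv r) x / (1 + (deriv r x) ^ 2) ^ ((3 : ℝ) / 2)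

noncomputable def surf (r : ℝ → ℝ) : ℝ :=
  ∫ x in (-π)..π, r x * Real.sqrt (1 + (deriv r x) ^ 2)

noncomputable def avgH (r : ℝ → ℝ) : ℝ :=
  (1 / surf r) * ∫ x in (-π)..π, meanCurv r x * r x * Real.sqrt (1 + (deriv r x) ^ 2)

/-- Governing operator of the axisymmetric averaged mean curvature flow. -/
noncomputable def Gop (r : ℝ → ℝ) (x : ℝ) : ℝ :=
  Real.sqrt (1 + (deriv r x) ^ 2) * (avgH r - meanCurv r x)

lemma key_integral (ρ : ℝ → ℝ) (hsm : ContDiff ℝ (⊤ : ℕ∞) ρ) (hpos : ∀ x, 0 < ρ x) :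
    (∫ x in (-π)..π, ρ x * Gop ρ x) = 0 := by
  have hsm' : ContDiff ℝ ∞ ρ := hsm.of_le (by simp)
  have hd1' : ContDiff ℝ ∞ (deriv ρ) := (contDiff_infty_iff_deriv.1 hsm').2
  have hd1 : Continuous (deriv ρ) := hd1'.continuous
  have hd2 : Continuous (deriv (deriv ρ)) :=
    ((contDiff_infty_iff_deriv.1 hd1').2).continuous
  have hρc : Continuous ρ := hsm.continuous
  have hsq : Continuous fun x => Real.sqrt (1 + deriv ρ x ^ 2) :=
    ((continuous_const.add (hd1.pow 2)).sqrt)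
  have hsqpos : ∀ x, 0 < Real.sqrt (1 + deriv ρ x ^ 2) := fun x =>
    Real.sqrt_pos.2 (by positivity)
  have hHc : Continuous (meanCurv ρ) := by
    unfold meanCurv
    apply Continuous.sub
    · exact continuous_const.div (hρc.mul hsq) fun x => by
        have := hpos x; have := hsqpos x; positivity
    · apply hd2.div
      · exact (continuous_const.add (hd1.pow 2)).rpow_const fun x => Or.inr (by norm_num)
      · intro x
        have h1 : (0:ℝ) < 1 + deriv ρ x ^ 2 := by positivity
        exact ne_of_gt (Real.rpow_pos_of_pos h1 _)
  have hint1 : IntervalIntegrable (fun x => ρ x * Real.sqrt (1 + deriv ρ x ^ 2))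
      MeasureTheory.volume (-π) π := (hρc.mul hsq).intervalIntegrable _ _
  have hint2 : IntervalIntegrable
      (fun x => meanCurv ρ x * ρ x * Real.sqrt (1 + deriv ρ x ^ 2))
      MeasureTheory.volume (-π) π := ((hHc.mul hρc).mul hsq).intervalIntegrable _ _
  have hS : 0 < surf ρ := by
    rw [surf]
    exact intervalIntegral.intervalIntegral_pos_of_pos_on hint1
      (fun x _ => mul_pos (hpos x) (hsqpos x)) (by linarith [Real.pi_pos])
  have havg : avgH ρ * surf ρ =
      ∫ x in (-π)..π, meanCurv ρ x * ρ x * Real.sqrt (1 + deriv ρ x ^ 2) := by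
    rw [avgH]; field_simp
  have hcongr : (∫ x in (-π)..π, ρ x * Gop ρ x)
      = ∫ x in (-π)..π, (avgH ρ * (ρ x * Real.sqrt (1 + deriv ρ x ^ 2)) -
          meanCurv ρ x * ρ x * Real.sqrt (1 + deriv ρ x ^ 2)) := by
    apply intervalIntegral.integral_congr
    intro x _
    simp only [Gop]
    ring
  rw [hcongr, intervalIntegral.integral_sub (hint1.const_mul _) hint2,
    intervalIntegral.integral_const_mul]
  rw [surf] at havg
  rw [← havg]
  ring

theorem volume_preserved (r : ℝ → ℝ → ℝ)
    (hsm : ∀ t, ContDiff ℝ (⊤ : ℕ∞) (r t))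
    (hpos : ∀ t x, 0 < r t x)
    (hper : ∀ t, Function.Periodic (r t) (2 * π))
    (hC1 : ContDiff ℝ 1 (Function.uncurry r))
    (hflow : ∀ t x, HasDerivAt (fun s => r s x) (Gop (r t) x) t) :
    ∀ t₁ t₂ : ℝ, (∫ x in (-π)..π, (r t₁ x) ^ 2) = ∫ x in (-π)..π, (r t₂ x) ^ 2 := by
  -- joint continuity of the time derivative
  have hrc : Continuous (Function.uncurry r) := hC1.continuous
  have hdiff : Differentiable ℝ (Function.uncurry r) := hC1.differentiable one_ne_zero
  have hGeq : ∀ t x, Gop (r t) x = fderiv ℝ (Function.uncurry r) (t, x) (1, 0) := by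
    intro t x
    have h1 : HasDerivAt (fun s => ((s : ℝ), x)) ((1 : ℝ), (0 : ℝ)) t :=
      (hasDerivAt_id t).prodMk (hasDerivAt_const t x)
    have h2 := ((hdiff (t, x)).hasFDerivAt).comp_hasDerivAt t h1
    exact (hflow t x).unique h2
  have hGcont : Continuous fun p : ℝ × ℝ => Gop (r p.1) p.2 := by
    have : Continuous fun p : ℝ × ℝ => fderiv ℝ (Function.uncurry r) p (1, 0) :=
      (hC1.continuous_fderiv one_ne_zero).clm_apply continuous_const
    exact this.congr fun p => (hGeq p.1 p.2).symm
  have hgc : Continuous fun p : ℝ × ℝ => 2 * r p.1 p.2 * Gop (r p.1) p.2 :=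
    (continuous_const.mul hrc).mul hGcont
  -- derivative of the volume functional
  have hF : ∀ t₀ : ℝ, HasDerivAt (fun t => ∫ x in (-π)..π, (r t x) ^ 2) 0 t₀ := by
    intro t₀
    have hK : IsCompact ((Metric.closedBall t₀ 1) ×ˢ (Set.uIcc (-π) π)) :=
      (isCompact_closedBall _ _).prod isCompact_uIcc
    obtain ⟨C, hC⟩ := hK.exists_bound_of_continuousOn hgc.continuousOn
    have main := intervalIntegral.hasDerivAt_integral_of_dominated_loc_of_deriv_le
      (F := fun t x => (r t x) ^ 2) (F' := fun t x => 2 * r t x * Gop (r t) x)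
      (x₀ := t₀) (s := Metric.ball t₀ 1) (a := -π) (b := π) (bound := fun _ => C)
      (μ := MeasureTheory.volume) (Metric.ball_mem_nhds t₀ one_pos)
      (Filter.Eventually.of_forall fun t =>
        (((hsm t).continuous).pow 2).aestronglyMeasurable)
      (((( hsm t₀).continuous).pow 2).intervalIntegrable _ _)
      ((hgc.comp (continuous_const.prodMk continuous_id)).aestronglyMeasurable)
      (Filter.Eventually.of_forall fun x hx t ht => by
        have hmem : (t, x) ∈ (Metric.closedBall t₀ 1) ×ˢ (Set.uIcc (-π) π) :=
          ⟨Metric.ball_subset_closedBall ht, Set.uIoc_subset_uIcc hx⟩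
        exact hC (t, x) hmem)
      (intervalIntegrable_const)
      (Filter.Eventually.of_forall fun x hx t ht => by
        have h := ((hflow t x).pow 2 : HasDerivAt (fun s => r s x ^ 2) _ t)
        refine h.congr_deriv ?_
        push_cast
        ring)
    have := main.2
    have hzero : (∫ x in (-π)..π, 2 * r t₀ x * Gop (r t₀) x) = 0 := by
      have hcongr : (∫ x in (-π)..π, 2 * r t₀ x * Gop (r t₀) x)
          = 2 * ∫ x in (-π)..π, r t₀ x * Gop (r t₀) x := by
        rw [← intervalIntegral.integral_const_mul]
        apply intervalIntegral.integral_congr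
        intro x _; ring
      rw [hcongr, key_integral (r t₀) (hsm t₀) (hpos t₀), mul_zero]
    rwa [hzero] at this
  intro t₁ t₂
  exact is_const_of_deriv_eq_zero (fun t => (hF t).differentiableAt)
    (fun t => (hF t).deriv) t₁ t₂
end

section
/- The Fréchet derivative of the governing operator G at a constant function r⋆ > 0 is given by DG(r⋆)ρ = (ρ_xx + r⋆^{−2}ρ) − (1/2π)∫_{𝕋}(ρ_xx(x) + r⋆^{−2}ρ(x)) dx for ρ ∈ C²(𝕋). -/
open Real

/-! Along the line `r_s = c + s • ρ` one has `r_s' = s ρ'` and `r_s'' = s ρ''`, and wherever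
`r ≠ 0` the weighted curvature simplifies to `H(r) r √(1 + r'²) = 1 - r r'' / (1 + r'²)`.
So for small `s` (when `r_s > 0` on the period) the average `h(r_s)` is the quotient
`(2π - s k(s)) / S(r_s)` with `k` continuous, so the numerator has derivative
`-k(0) = -c ∫ ρ''`, while `S(r_s)` is differentiated under the integral sign. The remaining
factors of `G(r_s)(x)` are explicit functions of `s`. -/

open Filter Topology Set MeasureTheory

theorem hasDerivAt_id_smul_of_continuousAt_zero {𝕜 E : Type*} [NontriviallyNormedField 𝕜]
    [NormedAddCommGroup E] [NormedSpace 𝕜 E] {k : 𝕜 → E} (hk : ContinuousAt k 0) :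
    HasDerivAt (fun s => s • k s) (k 0) 0 := by
  rw [hasDerivAt_iff_tendsto_slope_zero]
  refine (hk.tendsto.mono_left nhdsWithin_le_nhds).congr' ?_
  filter_upwards [self_mem_nhdsWithin] with t (ht : t ≠ 0)
  simp [smul_smul, ht]

theorem intervalIntegral.hasDerivAt_integral_of_continuous_partial {E : Type*}
    [NormedAddCommGroup E] [NormedSpace ℝ E] {F F' : ℝ → ℝ → E} {a b s₀ : ℝ}
    (hF : ∀ s, Continuous (F s)) (hF' : Continuous (Function.uncurry F'))
    (hdiff : ∀ s y, HasDerivAt (F · y) (F' s y) s) :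
    HasDerivAt (fun s => ∫ y in a..b, F s y) (∫ y in a..b, F' s₀ y) s₀ := by
  obtain ⟨M, hM⟩ :=
    ((isCompact_closedBall s₀ 1).prod isCompact_uIcc).exists_bound_of_continuousOn
      (hF'.continuousOn (s := Metric.closedBall s₀ 1 ×ˢ uIcc a b))
  refine (intervalIntegral.hasDerivAt_integral_of_dominated_loc_of_deriv_le (bound := fun _ => M)
    (Metric.closedBall_mem_nhds s₀ one_pos) (.of_forall fun s => (hF s).aestronglyMeasurable)
    ((hF s₀).intervalIntegrable _ _)
    (hF'.comp (Continuous.prodMk_right s₀)).aestronglyMeasurable ?_ intervalIntegrable_const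
    (.of_forall fun y _ s _ => hdiff s y)).2
  exact .of_forall fun y hy s hs => hM (s, y) ⟨hs, uIoc_subset_uIcc hy⟩

theorem meanCurv_mul_mul_sqrt (r : ℝ → ℝ) {y : ℝ} (hr : r y ≠ 0) :
    meanCurv r y * r y * √(1 + deriv r y ^ 2) =
      1 - deriv (deriv r) y * r y / (1 + deriv r y ^ 2) := by
  have hpos : 0 < 1 + deriv r y ^ 2 := by positivity
  have hsq := Real.sq_sqrt hpos.le
  have hpow : (1 + deriv r y ^ 2) ^ ((3 : ℝ) / 2) = √(1 + deriv r y ^ 2) ^ 3 := by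
    rw [show (3 : ℝ) / 2 = 1 / 2 * (3 : ℕ) by norm_num, Real.rpow_mul hpos.le,
      Real.rpow_natCast, Real.sqrt_eq_rpow]
  have hsqrt : √(1 + deriv r y ^ 2) ≠ 0 := (Real.sqrt_pos.2 hpos).ne'
  rw [meanCurv, hpow]
  field_simp
  rw [hsq]

theorem deriv_const_add_mul (c s : ℝ) (ρ : ℝ → ℝ) :
    deriv (fun y => c + s * ρ y) = fun y => s * deriv ρ y := by
  rw [deriv_const_add', deriv_const_mul_field']

theorem hasDerivAt_one_add_mul_sq (a : ℝ) : HasDerivAt (fun s : ℝ => 1 + (s * a) ^ 2) 0 0 := by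
  simpa using (((hasDerivAt_id (0 : ℝ)).mul_const a).pow 2).const_add 1

section

variable {c : ℝ} {ρ : ℝ → ℝ}

theorem hasDerivAt_meanCurv_const_add_mul (hc : c ≠ 0) (x : ℝ) :
    HasDerivAt (fun s => meanCurv (fun y => c + s * ρ y) x)
      (-(ρ x / c ^ 2) - deriv (deriv ρ) x) 0 := by
  simp only [meanCurv, deriv_const_add_mul, deriv_const_mul_field']
  have hsqrt := (hasDerivAt_one_add_mul_sq (deriv ρ x)).sqrt (by norm_num)
  have hr : HasDerivAt (fun s : ℝ => c + s * ρ x) (ρ x) 0 := by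
    simpa using ((hasDerivAt_id (0 : ℝ)).mul_const (ρ x)).const_add c
  have hpow := (hasDerivAt_one_add_mul_sq (deriv ρ x)).rpow_const (p := (3 : ℝ) / 2)
    (.inl (by norm_num))
  have hcurv : HasDerivAt (fun s : ℝ => s * deriv (deriv ρ) x) (deriv (deriv ρ) x) 0 := by
    simpa using (hasDerivAt_id (0 : ℝ)).mul_const (deriv (deriv ρ) x)
  refine (((hasDerivAt_const (0 : ℝ) (1 : ℝ)).fun_div (hr.fun_mul hsqrt)
    (by simpa using hc)).fun_sub (hcurv.fun_div hpow (by norm_num))).congr_deriv ?_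
  norm_num
  field_simp

theorem hasDerivAt_surf_const_add_mul (hρ : Continuous ρ) (hρ' : Continuous (deriv ρ)) :
    HasDerivAt (fun s => surf (fun y => c + s * ρ y)) (∫ y in (-π)..π, ρ y) 0 := by
  have hpos : ∀ s y, 0 < 1 + (s * deriv ρ y) ^ 2 := fun s y => by positivity
  have hsqrt : ∀ s y, √(1 + (s * deriv ρ y) ^ 2) ≠ 0 :=
    fun s y => (Real.sqrt_pos.2 (hpos s y)).ne'
  have hdiff : ∀ s y, HasDerivAt (fun s => (c + s * ρ y) * √(1 + (s * deriv ρ y) ^ 2))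
      (ρ y * √(1 + (s * deriv ρ y) ^ 2) +
        (c + s * ρ y) * (s * deriv ρ y ^ 2 / √(1 + (s * deriv ρ y) ^ 2))) s := by
    intro s y
    have hinner : HasDerivAt (fun s => 1 + (s * deriv ρ y) ^ 2)
        (2 * (s * deriv ρ y) * deriv ρ y) s := by
      simpa using ((hasDerivAt_mul_const (deriv ρ y)).pow 2).const_add 1
    refine (((hasDerivAt_mul_const (ρ y)).const_add c).mul
      (hinner.sqrt (hpos s y).ne')).congr_deriv ?_
    field_simp
  have hcont : Continuous (Function.uncurry fun s y => ρ y * √(1 + (s * deriv ρ y) ^ 2) +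
      (c + s * ρ y) * (s * deriv ρ y ^ 2 / √(1 + (s * deriv ρ y) ^ 2))) := by
    fun_prop (disch := exact fun p => hsqrt p.1 p.2)
  simp only [surf, deriv_const_add_mul]
  exact (intervalIntegral.hasDerivAt_integral_of_continuous_partial (fun s => by fun_prop)
    hcont hdiff).congr_deriv (by simp)

theorem avgH_const_add_mul_eventuallyEq (hc : 0 < c) (hρ : Continuous ρ)
    (hρ' : Continuous (deriv ρ)) (hρ'' : Continuous (deriv (deriv ρ))) :
    (fun s => avgH (fun y => c + s * ρ y)) =ᶠ[𝓝 0] fun s =>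
      (2 * π - s * ∫ y in (-π)..π,
        deriv (deriv ρ) y * (c + s * ρ y) / (1 + (s * deriv ρ y) ^ 2)) /
        surf (fun y => c + s * ρ y) := by
  have hpos : ∀ᶠ s in 𝓝 (0 : ℝ), ∀ y ∈ uIcc (-π) π, 0 < c + s * ρ y :=
    isCompact_uIcc.eventually_forall_of_forall_eventually fun y _ =>
      ((show Continuous fun p : ℝ × ℝ => c + p.1 * ρ p.2 by fun_prop).tendsto (0, y))
        |>.eventually (lt_mem_nhds (by simpa using hc))
  filter_upwards [hpos] with s hs
  have hintegrand : EqOn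
      (fun y => meanCurv (fun y => c + s * ρ y) y * (c + s * ρ y) *
        √(1 + deriv (fun y => c + s * ρ y) y ^ 2))
      (fun y => 1 - s * (deriv (deriv ρ) y * (c + s * ρ y) / (1 + (s * deriv ρ y) ^ 2)))
      (uIcc (-π) π) := fun y hy => by
    refine (meanCurv_mul_mul_sqrt (fun y => c + s * ρ y) (hs y hy).ne').trans ?_
    simp only [deriv_const_add_mul, deriv_const_mul_field']
    ring
  have hint : IntervalIntegrable
      (fun y => deriv (deriv ρ) y * (c + s * ρ y) / (1 + (s * deriv ρ y) ^ 2)) volume (-π) π :=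
    (by fun_prop (disch := exact fun y => by positivity) : Continuous _).intervalIntegrable _ _
  rw [avgH, intervalIntegral.integral_congr hintegrand,
    intervalIntegral.integral_sub intervalIntegrable_const (hint.const_mul s),
    intervalIntegral.integral_const_mul]
  simp only [intervalIntegral.integral_const, smul_eq_mul, mul_one]
  ring

theorem hasDerivAt_avgH_const_add_mul (hc : 0 < c) (hρ : Continuous ρ)
    (hρ' : Continuous (deriv ρ)) (hρ'' : Continuous (deriv (deriv ρ))) :
    HasDerivAt (fun s => avgH (fun y => c + s * ρ y))
      (-(∫ y in (-π)..π, deriv (deriv ρ) y) / (2 * π) -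
        (∫ y in (-π)..π, ρ y) / (2 * π * c ^ 2)) 0 := by
  set k : ℝ → ℝ := fun s =>
    ∫ y in (-π)..π, deriv (deriv ρ) y * (c + s * ρ y) / (1 + (s * deriv ρ y) ^ 2)
  have hk : Continuous k :=
    intervalIntegral.continuous_parametric_intervalIntegral_of_continuous'
      (by fun_prop (disch := exact fun p => by positivity)) _ _
  have hnum : HasDerivAt (fun s => 2 * π - s * k s)
      (-(c * ∫ y in (-π)..π, deriv (deriv ρ) y)) 0 := by
    simpa [k, intervalIntegral.integral_mul_const, mul_comm c] using
      (hasDerivAt_id_smul_of_continuousAt_zero hk.continuousAt).const_sub (2 * π)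
  have hsurf : surf (fun y => c + 0 * ρ y) = 2 * π * c := by simp [surf, two_mul]
  refine ((hnum.fun_div (hasDerivAt_surf_const_add_mul hρ hρ') (by rw [hsurf]; positivity)
    ).congr_of_eventuallyEq (avgH_const_add_mul_eventuallyEq hc hρ hρ' hρ'')).congr_deriv ?_
  rw [hsurf]
  simp only [neg_mul, zero_mul, sub_zero]
  field_simp

end

theorem frechet_deriv_G_at_cylinder_general (c : ℝ) (hc : 0 < c)
    (ρ : ℝ → ℝ) (hρ : ContDiff ℝ 2 ρ) :
    ∀ x : ℝ,
      HasDerivAt (fun s : ℝ => Gop (fun y => c + s * ρ y) x)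
        ((deriv (deriv ρ) x + ρ x / c ^ 2) -
          (1 / (2 * π)) * ∫ y in (-π)..π, (deriv (deriv ρ) y + ρ y / c ^ 2)) 0 := by
  intro x
  have hρ' : ContDiff ℝ 1 (deriv ρ) := hρ.deriv' (n := 1)
  have havg := hasDerivAt_avgH_const_add_mul hc hρ.continuous hρ'.continuous
    hρ'.continuous_deriv_one
  have hsqrt := (hasDerivAt_one_add_mul_sq (deriv ρ x)).sqrt (by norm_num)
  simp only [Gop, deriv_const_add_mul]
  refine (hsqrt.fun_mul (havg.fun_sub (hasDerivAt_meanCurv_const_add_mul hc.ne' x)))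
    |>.congr_deriv ?_
  rw [intervalIntegral.integral_add (hρ'.continuous_deriv_one.intervalIntegrable _ _)
    ((hρ.continuous.div_const _).intervalIntegrable _ _), intervalIntegral.integral_div]
  norm_num
  field_simp
  ring

/-- The (directional) derivative of the governing operator `G` at a constant function
`r⋆ > 0`, in the direction `ρ`, is
`ρ ↦ (ρ_xx + r⋆⁻²ρ) − (1/2π)∫(ρ_xx + r⋆⁻²ρ)`. -/
theorem frechet_deriv_G_at_cylinder (c : ℝ) (hc : 0 < c)
    (ρ : ℝ → ℝ) (hρ : ContDiff ℝ 2 ρ) (hper : Function.Periodic ρ (2 * π)) :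
    ∀ x : ℝ,
      HasDerivAt (fun s : ℝ => Gop (fun y => c + s * ρ y) x)
        ((deriv (deriv ρ) x + ρ x / c ^ 2) -
          (1 / (2 * π)) * ∫ y in (-π)..π, (deriv (deriv ρ) y + ρ y / c ^ 2)) 0 :=
  frechet_deriv_G_at_cylinder_general c hc ρ hρ
end
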